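/- Let V be a ℤ₊-graded vertex algebra and O(V), ∗ as in Zhu's construction. Then O(V) is a two-sided ideal for the operation ∗ (i.e., u ∗ c and c ∗ u lie in O(V) for all u ∈ V, c ∈ O(V)), and the induced product on A(V) = V/O(V) is associative with the image of the vacuum 𝟙 as identity element. -/

import Mathlib

noncomputable section

open scoped BigOperators

/-- The generalized binomial coefficient `C(n, k)` for `n : ℤ`, `k : ℕ`, valued in `ℂ`. -/
def zchoose (n : ℤ) (k : ℕ) : ℂ :=
  (∏ i ∈ Finset.range k, ((n : ℂ) - (i : ℂ))) / (k.factorial : ℂ)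

/-- A vertex algebra over `ℂ`: a state-field correspondence given by modes
`mode u n : V →ₗ[ℂ] V` (the coefficient `u_n` of `Y(u,z) = ∑ u_n z^{-n-1}`), a vacuum `𝟙`
with `Y(𝟙,z) = id`, creation property, truncation, and the Jacobi identity in the
equivalent form of the Borcherds identity on modes. -/
structure VertexAlgebra (V : Type*) [AddCommGroup V] [Module ℂ V] where
  mode : V →ₗ[ℂ] ℤ → V →ₗ[ℂ] V
  vacuum : V
  vacuum_mode : ∀ (n : ℤ) (v : V), mode vacuum n v = if n = -1 then v else 0
  creation : ∀ u : V, mode u (-1) vacuum = u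
  creation_nonneg : ∀ (u : V) (n : ℤ), 0 ≤ n → mode u n vacuum = 0
  truncation : ∀ u v : V, ∃ N : ℕ, ∀ n : ℕ, N ≤ n → mode u (n : ℤ) v = 0
  borcherds : ∀ (u v w : V) (p q r : ℤ),
    ∑ᶠ i : ℕ, zchoose p i • mode (mode u (r + (i : ℤ)) v) (p + q - (i : ℤ)) w
      = ∑ᶠ i : ℕ, ((-1 : ℂ) ^ i * zchoose r i) •
          (mode u (p + r - (i : ℤ)) (mode v (q + (i : ℤ)) w)
            - ((-1 : ℂ) ^ r) • mode v (q + r - (i : ℤ)) (mode u (p + (i : ℤ)) w))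

/-- A `ℤ₊`-graded vertex algebra: `V = ⊕_{n ≥ 0} V_n` with `dim V_0 = 1`, vacuum of
weight `0`, and `u_m w ∈ V_{i+j-m-1}` for `u ∈ V_i`, `w ∈ V_j` (the supremum below
being `⊥` when `i + j - m - 1 < 0`). -/
structure GradedVertexAlgebra (V : Type*) [AddCommGroup V] [Module ℂ V]
    extends VertexAlgebra V where
  grade : ℕ → Submodule ℂ V
  decomp : DirectSum.Decomposition grade
  vacuum_mem : vacuum ∈ grade 0
  grade_zero_dim : Module.finrank ℂ (grade 0) = 1
  mode_grade : ∀ (i j : ℕ) (m : ℤ) (u w : V), u ∈ grade i → w ∈ grade j →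
    mode u m w ∈ ⨆ (k : ℕ) (_ : (k : ℤ) = (i : ℤ) + (j : ℤ) - m - 1), grade k

namespace GradedVertexAlgebra

variable {V : Type*} [AddCommGroup V] [Module ℂ V]

/-- `V_+ = ⊕_{n ≥ 1} V_n`. -/
def Vplus (W : GradedVertexAlgebra V) : Submodule ℂ V :=
  ⨆ n : {n : ℕ // 1 ≤ n}, W.grade n

/-- `C_1(V)`: the span of all `u_{-1}v` and `u_{-2}𝟙` for `u, v ∈ V_+`. -/
def C1 (W : GradedVertexAlgebra V) : Submodule ℂ V :=
  Submodule.span ℂ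
    ({x | ∃ u ∈ W.Vplus, ∃ v ∈ W.Vplus, x = W.mode u (-1) v} ∪
     {x | ∃ u ∈ W.Vplus, x = W.mode u (-2) W.vacuum})

/-- Zhu's product `u ∗ v = Res_z Y(u,z)v (1+z)^k / z = ∑_i C(k,i) u_{i-1} v` for `u`
homogeneous of weight `k`. -/
def starH (W : GradedVertexAlgebra V) (k : ℕ) (u v : V) : V :=
  ∑ i ∈ Finset.range (k + 1), (k.choose i : ℂ) • W.mode u ((i : ℤ) - 1) v

/-- `u ∘ v = Res_z Y(u,z)v (1+z)^k / z² = ∑_i C(k,i) u_{i-2} v` for `u` homogeneous of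
weight `k`. -/
def circH (W : GradedVertexAlgebra V) (k : ℕ) (u v : V) : V :=
  ∑ i ∈ Finset.range (k + 1), (k.choose i : ℂ) • W.mode u ((i : ℤ) - 2) v

/-- `O(V)`: the span of all `u ∘ v` for homogeneous `u` and arbitrary `v`. -/
def O (W : GradedVertexAlgebra V) : Submodule ℂ V :=
  Submodule.span ℂ {x | ∃ (k : ℕ) (u v : V), u ∈ W.grade k ∧ x = W.circH k u v}

/-- The homogeneous component of weight `k` of a vector. -/
noncomputable def component (W : GradedVertexAlgebra V) (k : ℕ) (v : V) : V :=
  letI := W.decomp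
  ((DirectSum.decompose W.grade v) k : V)

/-- Zhu's product `∗` on all of `V`, extended linearly from homogeneous first arguments. -/
noncomputable def gstar (W : GradedVertexAlgebra V) (u v : V) : V :=
  ∑ᶠ k : ℕ, W.starH k (W.component k u) v

end GradedVertexAlgebra

/-!
Everything is expressed through the residues `Res_z Y(u,z) v (1+z)^n z^a = ∑ᵢ C(n,i) u_{a+i} v`,
so that `u ∗ v` and `u ∘ v` are the cases `a = -1` and `a = -2` with `n = wt u`. The basic fact is
Zhu's observation that `Res_z Y(u,z) v (1+z)^{wt u} z^a ∈ O(V)` for every `a ≤ -2`, which follows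
from the `L(-1)`-derivative property. The commutator formula then gives `u ∗ O(V) ⊆ O(V)`. The
Jacobi identity, after expanding `(1+z₀+z₂)^{wt u}` in two ways, writes
`(Res_z Y(u,z) v (1+z)^{wt u} z^{-1-n}) ∗ w` as a sum of residues of the same kind, all in `O(V)`
except `u ∗ (v ∗ w)` when `n = 0`: this gives `O(V) ∗ V ⊆ O(V)` (`n = 1`) and associativity
modulo `O(V)` (`n = 0`).
-/

open Finset

section BinomSum

variable {M N : Type*} [AddCommGroup M] [Module ℂ M] [AddCommGroup N] [Module ℂ N]

/-- If `z p = Res_z f(z) z^p`, then `binomSum n a z = Res_z f(z) (1+z)^n z^a`. -/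
def binomSum (n : ℕ) (a : ℤ) : (ℤ → M) →ₗ[ℂ] M :=
  ∑ i ∈ range (n + 1), (n.choose i : ℂ) • LinearMap.proj (a + i)

lemma binomSum_apply (n : ℕ) (a : ℤ) (z : ℤ → M) :
    binomSum n a z = ∑ i ∈ range (n + 1), (n.choose i : ℂ) • z (a + i) := by
  simp [binomSum]

lemma binomSum_zero (a : ℤ) (z : ℤ → M) : binomSum 0 a z = z a := by
  simp [binomSum_apply]

lemma binomSum_congr {n : ℕ} {a : ℤ} {z z' : ℤ → M} (h : ∀ i ≤ n, z (a + i) = z' (a + i)) :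
    binomSum n a z = binomSum n a z' := by
  simp only [binomSum_apply]
  exact sum_congr rfl fun i hi => by rw [h i (Nat.lt_succ_iff.mp (mem_range.mp hi))]

lemma binomSum_comp_add_const (n : ℕ) (a c : ℤ) (z : ℤ → M) :
    binomSum n a (fun b => z (b + c)) = binomSum n (a + c) z := by
  simp only [binomSum_apply, add_right_comm a]

lemma LinearMap.map_binomSum (f : M →ₗ[ℂ] N) (n : ℕ) (a : ℤ) (z : ℤ → M) :
    f (binomSum n a z) = binomSum n a (fun b => f (z b)) := by
  simp [binomSum_apply]

lemma binomSum_succ (n : ℕ) (a : ℤ) (z : ℤ → M) :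
    binomSum (n + 1) a z = binomSum n a z + binomSum n (a + 1) z := by
  have h := sum_choose_succ_nsmul (fun i _ => z (a + i)) n
  simp only [binomSum_apply, Nat.cast_smul_eq_nsmul]
  convert h using 3
  push_cast
  ring_nf

lemma binomSum_add (m n : ℕ) (a : ℤ) (z : ℤ → M) :
    binomSum (m + n) a z = binomSum n a (fun b => binomSum m b z) := by
  induction n generalizing a with
  | zero => rw [binomSum_zero, add_zero]
  | succ n ih => rw [← add_assoc, binomSum_succ, binomSum_succ, ih, ih]

/-- `p ↦ p • z (p - 1)` is the coefficient sequence of `-f'`, so this is integration by parts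
against `(1+z)^{n+1} z^a`. -/
lemma binomSum_smul_pred (n : ℕ) (a : ℤ) (z : ℤ → M) :
    binomSum (n + 1) a (fun p => (p : ℂ) • z (p - 1)) =
      (a : ℂ) • binomSum n (a - 1) z + ((a : ℂ) + n + 1) • binomSum n a z := by
  induction n generalizing a with
  | zero =>
    simp only [binomSum_succ, binomSum_zero, add_sub_cancel_right]
    push_cast
    ring_nf
  | succ n ih =>
    rw [binomSum_succ, ih, ih, binomSum_succ n (a - 1), binomSum_succ n a, sub_add_cancel,
      add_sub_cancel_right]
    push_cast
    module

lemma sum_choose_mul_choose_smul (k t : ℕ) (f : ℤ → M) :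
    ∑ j ∈ range (k + 1), ((k.choose j : ℂ) * (j.choose t : ℂ)) • f j =
      (k.choose t : ℂ) • binomSum (k - t) t f := by
  rcases le_or_gt t k with htk | hkt
  · rw [binomSum_apply, smul_sum, range_eq_Ico, ← sum_Ico_consecutive _ (Nat.zero_le t)
      (by omega : t ≤ k + 1), sum_eq_zero fun j hj => by
        rw [Nat.choose_eq_zero_of_lt (mem_Ico.mp hj).2]; simp,
      zero_add, sum_Ico_eq_sum_range, show k + 1 - t = k - t + 1 by omega]
    refine sum_congr rfl fun j hj => ?_
    rw [smul_smul, ← Nat.cast_mul, ← Nat.cast_mul, Nat.choose_mul (Nat.le_add_right t j),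
      Nat.add_sub_cancel_left]
    push_cast
    rfl
  · rw [Nat.choose_eq_zero_of_lt hkt, Nat.cast_zero, zero_smul]
    exact sum_eq_zero fun j hj => by
      rw [Nat.choose_eq_zero_of_lt (by rw [mem_range] at hj; omega : j < t)]; simp

/-- The two expansions `∑ᵢ C(k,i) z₀ⁱ (1+z₂)^{k-i}` and `∑ₛ C(k,s) (z₀+z₂)^s` of
`(1+z₀+z₂)^k`. -/
lemma sum_choose_smul_binomSum (k m : ℕ) (a : ℤ) (Z : ℕ → ℤ → M) :
    ∑ i ∈ range (k + 1), (k.choose i : ℂ) • binomSum (k + m - i) a (Z i) =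
      ∑ s ∈ range (k + 1), (k.choose s : ℂ) •
        binomSum m a (fun q => ∑ i ∈ range (s + 1), (s.choose i : ℂ) • Z i (s + q - i)) := by
  have hinner : ∀ s ∈ range (k + 1),
      binomSum m a (fun q => ∑ i ∈ range (s + 1), (s.choose i : ℂ) • Z i (s + q - i)) =
        ∑ i ∈ range (k + 1), (s.choose i : ℂ) • binomSum m (s + (a - i)) (Z i) := by
    intro s hs
    rw [← sum_subset (range_subset_range.mpr (mem_range.mp hs)) fun i _ hi => by
      rw [Nat.choose_eq_zero_of_lt (by simpa using hi), Nat.cast_zero, zero_smul]]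
    simp only [binomSum_apply, smul_sum, smul_smul]
    rw [sum_comm]
    refine sum_congr rfl fun t _ => sum_congr rfl fun i _ => ?_
    ring_nf
  symm
  rw [sum_congr rfl fun s hs => by rw [hinner s hs], sum_congr rfl fun s _ => smul_sum, sum_comm]
  refine sum_congr rfl fun i hi => ?_
  simp only [smul_smul]
  have hshift := binomSum_comp_add_const (k - i) i (a - i) fun p => binomSum m p (Z i)
  rw [add_sub_cancel] at hshift
  rw [sum_choose_mul_choose_smul k i fun s => binomSum m (s + (a - i)) (Z i), hshift,
    ← binomSum_add, show k + m - i = m + (k - i) by have := mem_range.mp hi; omega]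

end BinomSum

open Polynomial in
lemma zchoose_eq_ringChoose (n : ℤ) (k : ℕ) : zchoose n k = Ring.choose (n : ℂ) k := by
  rw [Ring.choose_eq_smul, ← aeval_eq_smeval, aeval_def, eval₂_eq_eval_map, descPochhammer_map,
    descPochhammer_eval_eq_prod_range, zchoose, smul_eq_mul, div_eq_inv_mul]

lemma zchoose_zero_right (n : ℤ) : zchoose n 0 = 1 := by
  rw [zchoose_eq_ringChoose, Ring.choose_zero_right]

lemma zchoose_one_right (n : ℤ) : zchoose n 1 = n := by
  rw [zchoose_eq_ringChoose, Ring.choose_one_right]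

lemma zchoose_natCast (s k : ℕ) : zchoose s k = s.choose k := by
  rw [zchoose_eq_ringChoose, Int.cast_natCast, Ring.choose_natCast]

lemma zchoose_natCast_sub_one (j l : ℕ) :
    zchoose ((j : ℤ) - 1) l = ∑ t ∈ range (l + 1), (-1 : ℂ) ^ (l - t) * j.choose t := by
  rw [zchoose_eq_ringChoose, Int.cast_sub, Int.cast_natCast, Int.cast_one, sub_eq_add_neg,
    Ring.add_choose_eq _ (Commute.neg_one_right _), Nat.sum_antidiagonal_eq_sum_range_succ_mk]
  refine sum_congr rfl fun t _ => ?_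
  rw [Ring.choose_natCast, Ring.choose_neg, add_sub_cancel_left, Ring.choose_natCast,
    Nat.choose_self]
  simp [Int.negOnePow, Units.smul_def, zsmul_eq_mul, mul_comm]

lemma finsum_eq_sum_range_of_eq_zero {M : Type*} [AddCommMonoid M] {f : ℕ → M} (N : ℕ)
    (h : ∀ i, N ≤ i → f i = 0) : ∑ᶠ i, f i = ∑ i ∈ range N, f i :=
  finsum_eq_sum_of_support_subset f fun i hi => by
    by_contra hN
    exact hi (h i (by simpa using hN))

namespace VertexAlgebra

variable {V : Type*} [AddCommGroup V] [Module ℂ V] (A : VertexAlgebra V)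

lemma exists_mode_eq_zero (u v : V) : ∃ N : ℕ, ∀ n : ℤ, N ≤ n → A.mode u n v = 0 := by
  obtain ⟨N, hN⟩ := A.truncation u v
  exact ⟨N, fun n hn => by lift n to ℕ using (by omega); exact hN n (by exact_mod_cast hn)⟩

/-- `Y(L(-1)u, z) = ∂_z Y(u, z)`, with `L(-1)u = u_{-2}𝟙`. -/
lemma mode_mode_neg_two_vacuum (u w : V) (p : ℤ) :
    A.mode (A.mode u (-2) A.vacuum) p w = (-(p : ℂ)) • A.mode u (p - 1) w := by
  have h := A.borcherds u A.vacuum w p 0 (-2)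
  rw [finsum_eq_sum_range_of_eq_zero 2 fun i hi => by
      rw [A.creation_nonneg u _ (by omega)]; simp,
    finsum_eq_sum_range_of_eq_zero 0 fun i _ => by
      rw [A.vacuum_mode, A.vacuum_mode, if_neg (by omega), if_neg (by omega)]; simp,
    sum_range_succ, sum_range_one, sum_range_zero] at h
  norm_num [zchoose_zero_right, zchoose_one_right, A.creation] at h
  rw [eq_neg_of_add_eq_zero_left h, neg_smul]

lemma mode_commutator (u a w : V) (p q : ℤ) {N : ℕ} (hN : ∀ i : ℕ, N ≤ i → A.mode u i a = 0) :
    A.mode u p (A.mode a q w) - A.mode a q (A.mode u p w) =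
      ∑ i ∈ range N, zchoose p i • A.mode (A.mode u i a) (p + q - i) w := by
  have h := A.borcherds u a w p q 0
  rw [finsum_eq_sum_range_of_eq_zero N fun i hi => by rw [zero_add, hN i hi]; simp,
    finsum_eq_single _ 0 fun i hi => by
      rw [show (0 : ℤ) = ((0 : ℕ) : ℤ) from rfl, zchoose_natCast, Nat.choose_eq_zero_of_lt
        (Nat.pos_of_ne_zero hi)]; simp] at h
  simpa [zchoose_zero_right] using h.symm

lemma borcherds_natCast (u v w : V) (s : ℕ) (q r : ℤ) {N : ℕ}
    (hvw : ∀ j : ℕ, N ≤ j → A.mode v (q + j) w = 0)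
    (huw : ∀ j : ℕ, N ≤ j → A.mode u (s + j) w = 0) :
    ∑ i ∈ range (s + 1), (s.choose i : ℂ) • A.mode (A.mode u (r + i) v) (s + q - i) w =
      ∑ j ∈ range N, ((-1 : ℂ) ^ j * zchoose r j) •
        (A.mode u (s + r - j) (A.mode v (q + j) w) -
          ((-1 : ℂ) ^ r) • A.mode v (q + r - j) (A.mode u (s + j) w)) := by
  have h := A.borcherds u v w s q r
  rwa [finsum_eq_sum_range_of_eq_zero (s + 1) fun i hi => by
      rw [zchoose_natCast, Nat.choose_eq_zero_of_lt (by omega), Nat.cast_zero, zero_smul],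
    finsum_eq_sum_range_of_eq_zero N fun j hj => by rw [hvw j hj, huw j hj]; simp,
    sum_congr rfl fun i _ => by rw [zchoose_natCast]] at h

/-- `A.res u n a v = Res_z Y(u,z) v (1+z)^n z^a`. -/
def res (u : V) (n : ℕ) (a : ℤ) : V →ₗ[ℂ] V :=
  binomSum n a ∘ₗ LinearMap.pi fun p => A.mode u p

lemma res_apply (u : V) (n : ℕ) (a : ℤ) (v : V) :
    A.res u n a v = binomSum n a fun p => A.mode u p v :=
  rfl

lemma mode_res_commutator (u a b : V) (p : ℤ) (α : ℕ) (q : ℤ) {N : ℕ}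
    (hN : ∀ i : ℕ, N ≤ i → A.mode u i a = 0) :
    A.mode u p (A.res a α q b) =
      A.res a α q (A.mode u p b) +
        ∑ l ∈ range N, zchoose p l • A.res (A.mode u l a) α (q + (p - l)) b := by
  have h : (fun r => A.mode u p (A.mode a r b)) = (fun r => A.mode a r (A.mode u p b)) +
      ∑ l ∈ range N, zchoose p l • fun r => A.mode (A.mode u l a) (r + (p - l)) b := by
    funext r
    rw [Pi.add_apply, Finset.sum_apply, ← sub_eq_iff_eq_add', A.mode_commutator u a b p r hN]
    refine sum_congr rfl fun l _ => ?_
    rw [Pi.smul_apply]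
    ring_nf
  rw [res_apply, LinearMap.map_binomSum, h, map_add, map_sum]
  simp only [map_smul, res_apply]
  congr 1
  exact sum_congr rfl fun l _ => by
    rw [binomSum_comp_add_const α q (p - l) fun r => A.mode (A.mode u l a) r b]

lemma binomSum_zchoose_smul_res (c b : V) (k α l : ℕ) :
    binomSum k (-1) (fun p => zchoose p l • A.res c α (-2 + (p - l)) b) =
      ∑ t ∈ range (l + 1),
        ((-1 : ℂ) ^ (l - t) * k.choose t) • A.res c (α + (k - t)) (t - 3 - l) b := by
  calc binomSum k (-1) (fun p => zchoose p l • A.res c α (-2 + (p - l)) b)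
      = ∑ j ∈ range (k + 1), ∑ t ∈ range (l + 1), (-1 : ℂ) ^ (l - t) •
          (((k.choose j : ℂ) * j.choose t) • A.res c α (j + (-3 - l)) b) := by
        refine (binomSum_apply _ _ _).trans <| sum_congr rfl fun j _ => ?_
        rw [neg_add_eq_sub, zchoose_natCast_sub_one, sum_smul, smul_sum]
        refine sum_congr rfl fun t _ => ?_
        simp only [smul_smul]
        ring_nf
    _ = ∑ t ∈ range (l + 1), ((-1 : ℂ) ^ (l - t) * k.choose t) •
          binomSum (k - t) t (fun p => A.res c α (p + (-3 - l)) b) := by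
        rw [sum_comm]
        refine sum_congr rfl fun t _ => ?_
        rw [← smul_sum, sum_choose_mul_choose_smul k t fun p => A.res c α (p + (-3 - l)) b,
          smul_smul]
    _ = _ := by
        refine sum_congr rfl fun t _ => ?_
        rw [binomSum_comp_add_const (k - t) t (-3 - l) fun p => A.res c α p b,
          show (t : ℤ) + (-3 - l) = t - 3 - l by ring, res_apply, binomSum_add]
        rfl

lemma sum_choose_smul_binomSum_eq_sum_res (u v w : V) (k m N : ℕ) (r : ℤ) (ε : ℂ)
    (c : ℕ → ℂ) :
    ∑ s ∈ range (k + 1), (k.choose s : ℂ) • binomSum m (-1) (fun q =>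
      ∑ j ∈ range N, c j • (A.mode u (s + r - j) (A.mode v (q + j) w) -
        ε • A.mode v (q + r - j) (A.mode u (s + j) w))) =
    ∑ j ∈ range N, c j • (A.res u k (r - j) (A.res v m (j - 1) w) -
        ε • A.res v m (r - 1 - j) (A.res u k j w)) := by
  simp only [res_apply, binomSum_apply, map_sum, map_smul, smul_sum, smul_sub, sum_sub_distrib]
  congr 1
  · rw [sum_congr rfl fun _ _ => sum_comm, sum_comm, sum_congr rfl fun _ _ => sum_comm]
    refine sum_congr rfl fun j _ => sum_congr rfl fun t _ => sum_congr rfl fun s _ => ?_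
    simp only [smul_smul]
    ring_nf
  · rw [sum_congr rfl fun _ _ => sum_comm, sum_comm]
    refine sum_congr rfl fun j _ => sum_congr rfl fun s _ => sum_congr rfl fun t _ => ?_
    simp only [smul_smul]
    ring_nf

end VertexAlgebra

namespace GradedVertexAlgebra

variable {V : Type*} [AddCommGroup V] [Module ℂ V] (W : GradedVertexAlgebra V)

lemma starH_eq_res (k : ℕ) (u v : V) : W.starH k u v = W.res u k (-1) v := by
  simp only [starH, VertexAlgebra.res_apply, binomSum_apply, neg_add_eq_sub]

lemma circH_eq_res (k : ℕ) (u v : V) : W.circH k u v = W.res u k (-2) v := by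
  simp only [circH, VertexAlgebra.res_apply, binomSum_apply, neg_add_eq_sub]

lemma mode_mem_grade {i j k : ℕ} {m : ℤ} {u w : V} (hu : u ∈ W.grade i) (hw : w ∈ W.grade j)
    (hk : (k : ℤ) = i + j - m - 1) : W.mode u m w ∈ W.grade k :=
  (iSup₂_le fun k' hk' => (congrArg W.grade (by omega : k' = k)).le : _ ≤ W.grade k)
    (W.mode_grade i j m u w hu hw)

lemma mode_eq_zero_of_lt {i j : ℕ} {m : ℤ} {u w : V} (hu : u ∈ W.grade i) (hw : w ∈ W.grade j)
    (h : (i : ℤ) + j - m - 1 < 0) : W.mode u m w = 0 :=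
  (Submodule.mem_bot ℂ).mp <|
    (iSup₂_le fun k' hk' => by omega : _ ≤ (⊥ : Submodule ℂ V)) (W.mode_grade i j m u w hu hw)

lemma component_of_mem_grade {k j : ℕ} {x : V} (hx : x ∈ W.grade k) :
    W.component j x = if k = j then x else 0 := by
  let := W.decomp
  split_ifs with h
  · subst h; exact DirectSum.decompose_of_mem_same W.grade hx
  · exact DirectSum.decompose_of_mem_ne W.grade hx h

lemma component_add (k : ℕ) (x y : V) :
    W.component k (x + y) = W.component k x + W.component k y := by
  let := W.decomp
  simp [component]

lemma component_smul (k : ℕ) (c : ℂ) (x : V) : W.component k (c • x) = c • W.component k x := by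
  let := W.decomp
  rw [component, component, DirectSum.decompose_smul]
  rfl

lemma exists_finset_component_eq_zero (x : V) :
    ∃ s : Finset ℕ, ∀ k ∉ s, W.component k x = 0 := by
  let := W.decomp
  classical
  exact ⟨(DirectSum.decompose W.grade x).support, fun k hk => by
    simp [component, DFinsupp.notMem_support_iff.mp hk]⟩

lemma starH_zero_left (k : ℕ) (v : V) : W.starH k 0 v = 0 := by
  simp [starH]

lemma starH_add_left (k : ℕ) (u u' v : V) :
    W.starH k (u + u') v = W.starH k u v + W.starH k u' v := by
  simp [starH, smul_add, sum_add_distrib]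

lemma starH_smul_left (k : ℕ) (c : ℂ) (u v : V) : W.starH k (c • u) v = c • W.starH k u v := by
  simp [starH, smul_sum, smul_comm c]

lemma gstar_eq_sum {x : V} {s : Finset ℕ} (hs : ∀ k ∉ s, W.component k x = 0) (v : V) :
    W.gstar x v = ∑ k ∈ s, W.starH k (W.component k x) v :=
  finsum_eq_sum_of_support_subset _ fun k hk => by
    by_contra hks
    exact hk (by simp [hs k hks, starH_zero_left])

lemma gstar_of_mem_grade {k : ℕ} {x : V} (hx : x ∈ W.grade k) (v : V) :
    W.gstar x v = W.starH k x v := by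
  rw [W.gstar_eq_sum (s := {k}) fun j hj => by
    rw [W.component_of_mem_grade hx, if_neg (Ne.symm (Finset.notMem_singleton.mp hj))],
    sum_singleton, W.component_of_mem_grade hx, if_pos rfl]

lemma gstar_add_left (x y v : V) : W.gstar (x + y) v = W.gstar x v + W.gstar y v := by
  classical
  obtain ⟨s, hs⟩ := W.exists_finset_component_eq_zero x
  obtain ⟨t, ht⟩ := W.exists_finset_component_eq_zero y
  have hs' : ∀ k ∉ s ∪ t, W.component k x = 0 := fun k hk => hs k (by simp_all)
  have ht' : ∀ k ∉ s ∪ t, W.component k y = 0 := fun k hk => ht k (by simp_all)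
  rw [W.gstar_eq_sum hs' v, W.gstar_eq_sum ht' v, W.gstar_eq_sum (s := s ∪ t) (fun k hk => by
    rw [component_add, hs' k hk, ht' k hk, add_zero]) v, ← sum_add_distrib]
  simp only [component_add, starH_add_left]

lemma gstar_smul_left (c : ℂ) (x v : V) : W.gstar (c • x) v = c • W.gstar x v := by
  obtain ⟨s, hs⟩ := W.exists_finset_component_eq_zero x
  rw [W.gstar_eq_sum hs v, W.gstar_eq_sum (s := s) (fun k hk => by
    rw [component_smul, hs k hk, smul_zero]) v, smul_sum]
  simp only [component_smul, starH_smul_left]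

def gstarRight (v : V) : V →ₗ[ℂ] V where
  toFun x := W.gstar x v
  map_add' x y := W.gstar_add_left x y v
  map_smul' c x := W.gstar_smul_left c x v

lemma gstarRight_apply (x v : V) : W.gstarRight v x = W.gstar x v :=
  rfl

lemma apply_mem_of_forall_mem_grade {S : Submodule ℂ V} (f : V →ₗ[ℂ] V)
    (h : ∀ k, ∀ x ∈ W.grade k, f x ∈ S) (x : V) : f x ∈ S := by
  let := W.decomp
  refine DirectSum.Decomposition.inductionOn W.grade (motive := (f · ∈ S)) ?_
    (fun x => h _ x x.2) (fun x y hx hy => ?_) x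
  · rw [map_zero]; exact S.zero_mem
  · rw [map_add]; exact S.add_mem hx hy

/-- Lowering `a` by one is the `L(-1)`-derivative identity applied to `u_{-2}𝟙`, which has weight
`wt u + 1`. -/
lemma res_mem_O {k : ℕ} {u : V} (hu : u ∈ W.grade k) {a : ℤ} (ha : a ≤ -2) (v : V) :
    W.res u k a v ∈ W.O := by
  induction a, ha using Int.leInductionDown generalizing k u v with
  | base => exact W.circH_eq_res k u v ▸ Submodule.subset_span ⟨k, u, v, hu, rfl⟩
  | pred a ha ih =>
    set u' := W.mode u (-2) W.vacuum
    have hu' : u' ∈ W.grade (k + 1) := W.mode_mem_grade hu W.vacuum_mem (by push_cast; ring)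
    have hderiv : W.res u' (k + 1) a v =
        -binomSum (k + 1) a fun p => (p : ℂ) • W.mode u (p - 1) v := by
      rw [VertexAlgebra.res_apply, ← map_neg]
      congr 1
      funext p
      simp [u', VertexAlgebra.mode_mode_neg_two_vacuum]
    have hlower : (a : ℂ) • W.res u k (a - 1) v =
        -W.res u' (k + 1) a v - ((a : ℂ) + k + 1) • W.res u k a v := by
      rw [hderiv, neg_neg, binomSum_smul_pred k a fun p => W.mode u p v]
      simp only [VertexAlgebra.res_apply, add_sub_cancel_right]
    have ha0 : (a : ℂ) ≠ 0 := by exact_mod_cast (by omega : a ≠ 0)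
    rw [← W.O.smul_mem_iff ha0, hlower]
    exact W.O.sub_mem (W.O.neg_mem (ih hu' v)) (W.O.smul_mem _ (ih hu v))

lemma res_add_mem_O {k : ℕ} {u : V} (hu : u ∈ W.grade k) (j : ℕ) {a : ℤ} (ha : a + j ≤ -2)
    (v : V) : W.res u (k + j) a v ∈ W.O := by
  rw [VertexAlgebra.res_apply, binomSum_add, binomSum_apply]
  exact W.O.sum_mem fun t ht =>
    W.O.smul_mem _ (W.res_mem_O hu (by have := mem_range.mp ht; omega) v)

/-- The Jacobi identity, after the factors `(1+z₂)^{wt (u_{i-1-n}v)}` are recombined into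
`(1+z₀+z₂)^{wt u} (1+z₂)^{wt v + n}`. -/
lemma gstar_res_eq_sum {k m : ℕ} {u v : V} (hu : u ∈ W.grade k) (hv : v ∈ W.grade m) (n : ℕ)
    (w : V) : ∃ N : ℕ, W.gstar (W.res u k (-1 - n) v) w =
      ∑ j ∈ range (N + 1), ((-1 : ℂ) ^ j * zchoose (-1 - n) j) •
        (W.res u k (-1 - n - j) (W.res v (m + n) (j - 1) w) -
          ((-1 : ℂ) ^ (-1 - n : ℤ)) • W.res v (m + n) (-1 - n - 1 - j) (W.res u k j w)) := by
  obtain ⟨N₁, hN₁⟩ := W.exists_mode_eq_zero v w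
  obtain ⟨N₂, hN₂⟩ := W.exists_mode_eq_zero u w
  refine ⟨N₁ + N₂, ?_⟩
  have hgrade : ∀ i ∈ range (k + 1), W.mode u (-1 - n + i) v ∈ W.grade (k + (m + n) - i) :=
    fun i hi => W.mode_mem_grade hu hv <| by
      have := mem_range.mp hi
      push_cast [Nat.cast_sub (by omega : i ≤ k + (m + n))]
      ring
  calc W.gstar (W.res u k (-1 - n) v) w
      = ∑ i ∈ range (k + 1), (k.choose i : ℂ) • binomSum (k + (m + n) - i) (-1)
          (fun p => W.mode (W.mode u (-1 - n + i) v) p w) := by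
        rw [VertexAlgebra.res_apply, binomSum_apply, ← gstarRight_apply, map_sum]
        refine sum_congr rfl fun i hi => ?_
        rw [map_smul, gstarRight_apply, W.gstar_of_mem_grade (hgrade i hi), starH_eq_res,
          VertexAlgebra.res_apply]
    _ = ∑ s ∈ range (k + 1), (k.choose s : ℂ) • binomSum (m + n) (-1) (fun q =>
          ∑ i ∈ range (s + 1),
            (s.choose i : ℂ) • W.mode (W.mode u (-1 - n + i) v) (s + q - i) w) :=
        sum_choose_smul_binomSum k (m + n) (-1) _
    _ = ∑ s ∈ range (k + 1), (k.choose s : ℂ) • binomSum (m + n) (-1) (fun q =>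
          ∑ j ∈ range (N₁ + N₂ + 1), ((-1 : ℂ) ^ j * zchoose (-1 - n) j) •
            (W.mode u (s + (-1 - n) - j) (W.mode v (q + j) w) -
              ((-1 : ℂ) ^ (-1 - n : ℤ)) • W.mode v (q + (-1 - n) - j) (W.mode u (s + j) w))) := by
        refine sum_congr rfl fun s _ => congrArg _ <| binomSum_congr fun t _ =>
          W.borcherds_natCast u v w s _ _ (fun j hj => hN₁ _ (by omega))
            fun j hj => hN₂ _ (by omega)
    _ = _ := W.sum_choose_smul_binomSum_eq_sum_res u v w k (m + n) _ (-1 - n) _ _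

lemma gstar_res_mem_O {k m : ℕ} {u v : V} (hu : u ∈ W.grade k) (hv : v ∈ W.grade m) {n : ℕ}
    (hn : 1 ≤ n) (w : V) : W.gstar (W.res u k (-1 - n) v) w ∈ W.O := by
  obtain ⟨N, hN⟩ := W.gstar_res_eq_sum hu hv n w
  rw [hN]
  exact W.O.sum_mem fun j _ => W.O.smul_mem _ <| W.O.sub_mem (W.res_mem_O hu (by omega) _)
    (W.O.smul_mem _ (W.res_add_mem_O hv n (by omega) _))

lemma gstar_starH_sub_starH_mem_O {k m : ℕ} {u v : V} (hu : u ∈ W.grade k)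
    (hv : v ∈ W.grade m) (w : V) :
    W.gstar (W.starH k u v) w - W.starH k u (W.starH m v w) ∈ W.O := by
  obtain ⟨N, hN⟩ := W.gstar_res_eq_sum hu hv 0 w
  rw [starH_eq_res, starH_eq_res, starH_eq_res, show (-1 : ℤ) = -1 - (0 : ℕ) by simp, hN,
    sum_range_succ', add_sub_assoc]
  refine W.O.add_mem (W.O.sum_mem fun j _ => W.O.smul_mem _ <| W.O.sub_mem
    (W.res_mem_O hu (by omega) _) (W.O.smul_mem _ (W.res_add_mem_O hv 0 (by omega) _))) ?_
  simp only [Nat.cast_zero, sub_zero, add_zero, zero_sub, pow_zero, zchoose_zero_right, one_mul,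
    one_smul, sub_sub_cancel_left]
  exact W.O.neg_mem (W.O.smul_mem _ (W.res_add_mem_O hv 0 (by simp) _))

/-- By the commutator formula, `u ∗ (a ∘ b) - a ∘ (u ∗ b)` is a combination of the residues
`Res_z Y(u_l a, z) b (1+z)^{wt a + wt u - t} z^{t-3-l}` with `t ≤ l`; these lie in `O(V)` by
`res_add_mem_O`, as `wt (u_l a) = wt a + wt u - l - 1`. -/
lemma starH_circH_mem_O {k α : ℕ} {u a : V} (hu : u ∈ W.grade k) (ha : a ∈ W.grade α) (b : V) :
    W.starH k u (W.circH α a b) ∈ W.O := by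
  obtain ⟨N, hN⟩ := W.truncation u a
  have hcomm : (fun p => W.mode u p (W.res a α (-2) b)) =
      (fun p => W.res a α (-2) (W.mode u p b)) +
        ∑ l ∈ range N, fun p => zchoose p l • W.res (W.mode u l a) α (-2 + (p - l)) b :=
    funext fun p => by simp [W.mode_res_commutator u a b p α (-2) hN, Finset.sum_apply]
  rw [starH_eq_res, circH_eq_res, VertexAlgebra.res_apply, hcomm, map_add, map_sum,
    ← LinearMap.map_binomSum (W.res a α (-2)) k (-1) fun p => W.mode u p b,
    ← VertexAlgebra.res_apply]
  refine W.O.add_mem (W.res_mem_O ha le_rfl _) (W.O.sum_mem fun l _ => ?_)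
  rw [VertexAlgebra.binomSum_zchoose_smul_res]
  by_cases hl : l + 1 ≤ k + α
  · have hc : W.mode u l a ∈ W.grade (k + α - 1 - l) := W.mode_mem_grade hu ha (by omega)
    refine W.O.sum_mem fun t ht => ?_
    have htl := mem_range.mp ht
    rcases le_or_gt t k with htk | hkt
    · rw [show α + (k - t) = k + α - 1 - l + (l + 1 - t) by omega]
      exact W.O.smul_mem _ (W.res_add_mem_O hc _ (by omega) b)
    · simp [Nat.choose_eq_zero_of_lt hkt]
  · rw [W.mode_eq_zero_of_lt hu ha (by omega)]
    simp [VertexAlgebra.res_apply, ← Pi.zero_def]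

lemma gstar_mem_O_left (u : V) {c : V} (hc : c ∈ W.O) : W.gstar u c ∈ W.O := by
  refine W.apply_mem_of_forall_mem_grade (W.gstarRight c) (fun k u hu => ?_) u
  rw [gstarRight_apply, W.gstar_of_mem_grade hu, starH_eq_res]
  refine (Submodule.span_le.mpr ?_ : W.O ≤ W.O.comap (W.res u k (-1))) hc
  rintro _ ⟨α, a, b, ha, rfl⟩
  rw [SetLike.mem_coe, Submodule.mem_comap, ← starH_eq_res]
  exact W.starH_circH_mem_O hu ha b

lemma gstar_mem_O_right {c : V} (hc : c ∈ W.O) (u : V) : W.gstar c u ∈ W.O := by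
  refine (Submodule.span_le.mpr ?_ : W.O ≤ W.O.comap (W.gstarRight u)) hc
  rintro _ ⟨α, a, b, ha, rfl⟩
  rw [SetLike.mem_coe, Submodule.mem_comap, circH_eq_res, ← LinearMap.comp_apply]
  refine W.apply_mem_of_forall_mem_grade (W.gstarRight u ∘ₗ W.res a α (-2)) (fun m b hb => ?_) b
  rw [LinearMap.comp_apply, gstarRight_apply, show (-2 : ℤ) = -1 - (1 : ℕ) by norm_num]
  exact W.gstar_res_mem_O ha hb le_rfl u

lemma gstar_gstar_sub_gstar_mem_O (u v w : V) :
    W.gstar (W.gstar u v) w - W.gstar u (W.gstar v w) ∈ W.O := by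
  refine W.apply_mem_of_forall_mem_grade
    (W.gstarRight w ∘ₗ W.gstarRight v - W.gstarRight (W.gstar v w)) (fun k u hu => ?_) u
  simp only [LinearMap.sub_apply, LinearMap.comp_apply, gstarRight_apply,
    W.gstar_of_mem_grade hu, starH_eq_res]
  refine W.apply_mem_of_forall_mem_grade
    (W.gstarRight w ∘ₗ W.res u k (-1) - W.res u k (-1) ∘ₗ W.gstarRight w) (fun m v hv => ?_) v
  simp only [LinearMap.sub_apply, LinearMap.comp_apply, gstarRight_apply,
    W.gstar_of_mem_grade hv, ← starH_eq_res]
  exact W.gstar_starH_sub_starH_mem_O hu hv w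

lemma vacuum_gstar (u : V) : W.gstar W.vacuum u = u := by
  simp [W.gstar_of_mem_grade W.vacuum_mem, starH, W.vacuum_mode]

lemma gstar_vacuum (u : V) : W.gstar u W.vacuum = u := by
  rw [← sub_eq_zero, ← Submodule.mem_bot ℂ]
  refine W.apply_mem_of_forall_mem_grade (W.gstarRight W.vacuum - LinearMap.id)
    (fun k u hu => ?_) u
  rw [LinearMap.sub_apply, gstarRight_apply, W.gstar_of_mem_grade hu, starH, sum_range_succ',
    sum_eq_zero fun i _ => by rw [W.creation_nonneg u _ (by omega), smul_zero]]
  simp [W.creation]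

end GradedVertexAlgebra

/-- `O(V)` is a two-sided ideal for `∗`, and the induced product on
`A(V) = V/O(V)` is associative with the image of the vacuum as identity element. -/
theorem zhu_algebra_structure {V : Type*} [AddCommGroup V] [Module ℂ V]
    (W : GradedVertexAlgebra V) :
    -- `O(V)` is a two-sided ideal for `∗`
    (∀ u c : V, c ∈ W.O → W.gstar u c ∈ W.O ∧ W.gstar c u ∈ W.O) ∧
    -- the induced product on `A(V) = V/O(V)` is associative
    (∀ u v w : V,
      W.O.mkQ (W.gstar (W.gstar u v) w) = W.O.mkQ (W.gstar u (W.gstar v w))) ∧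
    -- the image of the vacuum `𝟙` is a two-sided identity in `A(V)`
    (∀ u : V, W.O.mkQ (W.gstar W.vacuum u) = W.O.mkQ u ∧
      W.O.mkQ (W.gstar u W.vacuum) = W.O.mkQ u) := by
  refine ⟨fun u c hc => ⟨W.gstar_mem_O_left u hc, W.gstar_mem_O_right hc u⟩,
    fun u v w => (Submodule.Quotient.eq W.O).mpr (W.gstar_gstar_sub_gstar_mem_O u v w),
    fun u => ?_⟩
  rw [W.vacuum_gstar, W.gstar_vacuum]
  exact ⟨rfl, rfl⟩
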